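/- Let A₁, A₂ be real square matrices with ψ(A₁) ≤ ψ(A₂) entrywise. Then 0 ≤ e^{ψ(A₁)} ≤ e^{ψ(A₂)} entrywise. -/

import Mathlib

noncomputable def metzlerPart {n : ℕ} (A : Matrix (Fin n) (Fin n) ℝ) : Matrix (Fin n) (Fin n) ℝ :=
  Matrix.of fun i j => if i = j then A i j else |A i j|

/-!
A Metzler matrix `M` becomes entrywise nonnegative after a shift `M + c • 1`, and
`exp M = e^{-c} • exp (M + c • 1)` because `c • 1` is central. On entrywise nonnegative matrices
the exponential is entrywise nonnegative and monotone, term by term in its power series, since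
matrix powers are.
-/

open NormedSpace Nat

namespace Matrix

variable {m R : Type*} [Fintype m] [DecidableEq m]

def IsMetzler [Zero R] [LE R] (M : Matrix m m R) : Prop :=
  ∀ i j, i ≠ j → 0 ≤ M i j

theorem pow_apply_mono [Semiring R] [PartialOrder R] [IsOrderedRing R] {B₁ B₂ : Matrix m m R}
    (hB₁ : ∀ i j, 0 ≤ B₁ i j) (h : ∀ i j, B₁ i j ≤ B₂ i j) (k : ℕ)
    (i j : m) : (B₁ ^ k) i j ≤ (B₂ ^ k) i j := by
  have hB₂ i j : 0 ≤ B₂ i j := (hB₁ i j).trans (h i j)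
  induction k generalizing j with
  | zero => rfl
  | succ k ih =>
    rw [pow_succ, pow_succ, mul_apply, mul_apply]
    exact Finset.sum_le_sum fun l _ =>
      mul_le_mul (ih l) (h l j) (hB₁ l j) (pow_apply_nonneg hB₂ k i l)

theorem IsMetzler.exists_add_smul_one_nonneg [Ring R] [LinearOrder R] [IsOrderedRing R]
    {M : Matrix m m R} (hM : M.IsMetzler) : ∃ c : R, ∀ i j, 0 ≤ (M + c • 1) i j := by
  refine ⟨∑ l, |M l l|, fun i j => ?_⟩
  rcases eq_or_ne i j with rfl | hij
  · have hdiag : |M i i| ≤ ∑ l, |M l l| :=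
      Finset.single_le_sum (fun l _ => abs_nonneg (M l l)) (Finset.mem_univ i)
    simp only [add_apply, smul_apply, one_apply_eq, smul_eq_mul, mul_one]
    exact neg_le_iff_add_nonneg'.mp (neg_le.mpr ((neg_le_neg hdiag).trans (neg_abs_le _)))
  · simpa [one_apply_ne hij] using hM i j hij

theorem hasSum_exp_apply (B : Matrix m m ℝ) (i j : m) :
    HasSum (fun k : ℕ => (k !⁻¹ : ℝ) * (B ^ k) i j) (exp B i j) := by
  open scoped Norms.Operator in
  have hB := exp_series_hasSum_exp' (𝕂 := ℝ) B
  exact Pi.hasSum.mp (Pi.hasSum.mp hB i) j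

theorem exp_add_smul_one (M : Matrix m m ℝ) (c : ℝ) :
    exp (M + c • 1) = Real.exp c • exp M := by
  rw [exp_add_of_commute _ _ ((Commute.one_right M).smul_right c), ← diagonal_one,
    ← diagonal_smul, exp_diagonal, Pi.exp_def, ← Real.exp_eq_exp_ℝ]
  ext i j
  simp [mul_diagonal, mul_comm]

variable {M M₁ M₂ B B₁ B₂ : Matrix m m ℝ}

theorem exp_apply_nonneg (hB : ∀ i j, 0 ≤ B i j) (i j : m) : 0 ≤ exp B i j :=
  (hasSum_exp_apply B i j).nonneg fun k => mul_nonneg (by positivity) (pow_apply_nonneg hB k i j)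

theorem exp_apply_mono (hB₁ : ∀ i j, 0 ≤ B₁ i j) (h : ∀ i j, B₁ i j ≤ B₂ i j) (i j : m) :
    exp B₁ i j ≤ exp B₂ i j :=
  hasSum_le (fun k => mul_le_mul_of_nonneg_left (pow_apply_mono hB₁ h k i j) (by positivity))
    (hasSum_exp_apply B₁ i j) (hasSum_exp_apply B₂ i j)

theorem exp_apply_eq_exp_neg_mul_exp_add_smul_one (M : Matrix m m ℝ) (c : ℝ) (i j : m) :
    exp M i j = Real.exp (-c) * exp (M + c • 1) i j := by
  rw [exp_add_smul_one, smul_apply, smul_eq_mul, ← mul_assoc, ← Real.exp_add, neg_add_cancel,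
    Real.exp_zero, one_mul]

theorem IsMetzler.exp_apply_nonneg (hM : M.IsMetzler) (i j : m) : 0 ≤ exp M i j := by
  obtain ⟨c, hc⟩ := hM.exists_add_smul_one_nonneg
  rw [exp_apply_eq_exp_neg_mul_exp_add_smul_one M c]
  exact mul_nonneg (Real.exp_nonneg _) (Matrix.exp_apply_nonneg hc i j)

theorem IsMetzler.exp_apply_mono (hM₁ : M₁.IsMetzler) (h : ∀ i j, M₁ i j ≤ M₂ i j) (i j : m) :
    exp M₁ i j ≤ exp M₂ i j := by
  obtain ⟨c, hc⟩ := hM₁.exists_add_smul_one_nonneg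
  have hshift : ∀ a b, (M₁ + c • 1) a b ≤ (M₂ + c • 1) a b := fun a b =>
    add_le_add_left (h a b) _
  rw [exp_apply_eq_exp_neg_mul_exp_add_smul_one M₁ c,
    exp_apply_eq_exp_neg_mul_exp_add_smul_one M₂ c]
  exact mul_le_mul_of_nonneg_left (Matrix.exp_apply_mono hc hshift i j) (Real.exp_nonneg _)

end Matrix

theorem isMetzler_metzlerPart {n : ℕ} (A : Matrix (Fin n) (Fin n) ℝ) :
    (metzlerPart A).IsMetzler := fun i j hij => by
  simp [metzlerPart, hij]

theorem exp_metzlerPart_monotone {n : ℕ} (A₁ A₂ : Matrix (Fin n) (Fin n) ℝ)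
    (h : ∀ i j, metzlerPart A₁ i j ≤ metzlerPart A₂ i j) :
    ∀ i j, 0 ≤ NormedSpace.exp (metzlerPart A₁) i j ∧
      NormedSpace.exp (metzlerPart A₁) i j ≤ NormedSpace.exp (metzlerPart A₂) i j :=
  fun i j => ⟨(isMetzler_metzlerPart A₁).exp_apply_nonneg i j,
    (isMetzler_metzlerPart A₁).exp_apply_mono h i j⟩
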